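/- arXiv:2511.11054 — 5 statements merged into one kernel-verified Lean document; each statement's English description precedes it below -/
import Mathlib

section
/- Let g(x) = a|x|^β + b x + c with β ∈ (1,2], a > 0, b > 0, c > 0. If there exists r > 1/b such that b - a(c r)^{β-1} > 1/r, then the equation g(x) = 0 has exactly two real solutions, and the larger solution x₊ satisfies x₊ ≥ -c/(b - a(c r)^{β-1}). -/
/-- A strictly convex function (of the form `a t^β - b t + c` on `[0,∞)` with `a>0`, `β>1`)
cannot have three distinct zeros. -/
lemma aux_three_zeros (a b c β : ℝ) (ha : 0 < a) (hβ : 1 < β) {p q s : ℝ}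
    (hp : 0 ≤ p) (hpq : p < q) (hqs : q < s)
    (e1 : a * p ^ β - b * p + c = 0) (e2 : a * q ^ β - b * q + c = 0)
    (e3 : a * s ^ β - b * s + c = 0) : False := by
  have hsp : (0:ℝ) < s - p := by linarith
  set lam := (s - q) / (s - p) with hlamdef
  set mu := (q - p) / (s - p) with hmudef
  have hlam : 0 < lam := div_pos (by linarith) hsp
  have hmu : 0 < mu := div_pos (by linarith) hsp
  have hsum : lam + mu = 1 := by
    rw [hlamdef, hmudef]; field_simp; ring
  have hs0 : (0:ℝ) ≤ s := by linarith
  have key := (strictConvexOn_rpow hβ).2 (Set.mem_Ici.2 hp) (Set.mem_Ici.2 hs0)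
    (by intro h; linarith : p ≠ s) hlam hmu hsum
  simp only [smul_eq_mul] at key
  have hq' : lam * p + mu * s = q := by
    rw [hlamdef, hmudef]; field_simp; ring
  rw [hq'] at key
  have h1 : a * p ^ β = b * p - c := by linarith
  have h2 : a * q ^ β = b * q - c := by linarith
  have h3 : a * s ^ β = b * s - c := by linarith
  have key2 : a * q ^ β < lam * (b * p - c) + mu * (b * s - c) := by
    rw [← h1, ← h3]; nlinarith [key]
  have heq : lam * (b * p - c) + mu * (b * s - c) = b * q - c := by
    linear_combination b * hq' - c * hsum
  linarith [key2, heq, h2]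

/-- Lemma A.1(i): for g(x) = a|x|^β + bx + c with a,b,c > 0 and β ∈ (1,2],
if there is r > 1/b with b - a(cr)^(β-1) > 1/r, then g = 0 has exactly two real
solutions, and the larger one x₊ satisfies x₊ ≥ -c/(b - a(cr)^(β-1)). -/
theorem stmt0 (a b c r β : ℝ) (hβ : β ∈ Set.Ioc (1:ℝ) 2)
    (ha : 0 < a) (hb : 0 < b) (hc : 0 < c)
    (hr : 1 / b < r) (hcond : 1 / r < b - a * (c * r) ^ (β - 1)) :
    ∃ x₁ x₂ : ℝ, x₁ < x₂ ∧
      a * |x₁| ^ β + b * x₁ + c = 0 ∧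
      a * |x₂| ^ β + b * x₂ + c = 0 ∧
      (∀ x : ℝ, a * |x| ^ β + b * x + c = 0 → x = x₁ ∨ x = x₂) ∧
      -(c / (b - a * (c * r) ^ (β - 1))) ≤ x₂ := by
  obtain ⟨hβ1, hβ2⟩ := hβ
  have hr0 : 0 < r := lt_trans (by positivity) hr
  set D := b - a * (c * r) ^ (β - 1) with hDdef
  have hD : 0 < D := lt_trans (by positivity) hcond
  have ht₀pos : 0 < c / D := div_pos hc hD
  -- c/D < c*r
  have hrD : 1 < D * r := (div_lt_iff₀ hr0).mp hcond
  have hlt : c / D < c * r := by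
    rw [div_lt_iff₀ hD]; nlinarith
  have hpow : (c / D) ^ (β - 1) < (c * r) ^ (β - 1) :=
    Real.rpow_lt_rpow (by positivity) hlt (by linarith)
  -- h(t₀) < 0
  have hsplit : (c / D) ^ β = (c / D) ^ (β - 1) * (c / D) := by
    rw [← Real.rpow_add_one (ne_of_gt ht₀pos), sub_add_cancel]
  have hE : a * (c / D) ^ β - b * (c / D) + c < 0 := by
    rw [hsplit]
    have h2' : a * (c / D) ^ (β - 1) < b - D := by
      have := mul_lt_mul_of_pos_left hpow ha
      rw [hDdef]; linarith
    have hDc : D * (c / D) = c := by field_simp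
    nlinarith [mul_lt_mul_of_pos_right h2' ht₀pos]
  -- large T
  have hba : 0 < b / a := div_pos hb ha
  set M := (b / a) ^ (1 / (β - 1)) with hMdef
  have hMpos : 0 < M := Real.rpow_pos_of_pos hba _
  set T := max (c / D + 1) (M + 1) with hTdef
  have hT1 : c / D < T := lt_of_lt_of_le (by linarith) (le_max_left _ _)
  have hTM : M < T := lt_of_lt_of_le (by linarith) (le_max_right _ _)
  have hT0 : 0 < T := lt_trans hMpos hTM
  have hMpow : M ^ (β - 1) = b / a := by
    rw [hMdef, ← Real.rpow_mul hba.le, one_div,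
      inv_mul_cancel₀ (by linarith : β - 1 ≠ 0), Real.rpow_one]
  have hTpow : b / a < T ^ (β - 1) := by
    rw [← hMpow]
    exact Real.rpow_lt_rpow hMpos.le hTM (by linarith)
  have hTsplit : T ^ β = T ^ (β - 1) * T := by
    rw [← Real.rpow_add_one (ne_of_gt hT0), sub_add_cancel]
  have hhT : 0 < a * T ^ β - b * T + c := by
    rw [hTsplit]
    have hF : b < a * T ^ (β - 1) := by
      have := mul_lt_mul_of_pos_left hTpow ha
      have hab : a * (b / a) = b := by field_simp
      linarith [hab ▸ this]
    nlinarith [mul_lt_mul_of_pos_right hF hT0]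
  -- continuity
  have hcont : Continuous (fun t : ℝ => a * t ^ β - b * t + c) := by
    have h1 : Continuous fun t : ℝ => t ^ β := Real.continuous_rpow_const (by linarith)
    exact ((continuous_const.mul h1).sub (continuous_const.mul continuous_id)).add
      continuous_const
  have hf0 : (fun t : ℝ => a * t ^ β - b * t + c) 0 = c := by
    simp [Real.zero_rpow (by linarith : β ≠ 0)]
  -- IVT : root in (0, c/D)
  obtain ⟨t₁, ht₁mem, ht₁⟩ := intermediate_value_Ioo' (le_of_lt ht₀pos) hcont.continuousOn
    (show (0:ℝ) ∈ Set.Ioo ((fun t : ℝ => a * t ^ β - b * t + c) (c / D))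
        ((fun t : ℝ => a * t ^ β - b * t + c) 0) from ⟨hE, by rw [hf0]; exact hc⟩)
  -- IVT : root in (c/D, T)
  obtain ⟨t₂, ht₂mem, ht₂⟩ := intermediate_value_Ioo (le_of_lt hT1) hcont.continuousOn
    (show (0:ℝ) ∈ Set.Ioo ((fun t : ℝ => a * t ^ β - b * t + c) (c / D))
        ((fun t : ℝ => a * t ^ β - b * t + c) T) from ⟨hE, hhT⟩)
  simp only at ht₁ ht₂
  obtain ⟨ht₁0, ht₁t₀⟩ := ht₁mem
  obtain ⟨ht₀t₂, _⟩ := ht₂mem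
  have ht₁t₂ : t₁ < t₂ := lt_trans ht₁t₀ ht₀t₂
  refine ⟨-t₂, -t₁, by linarith, ?_, ?_, ?_, by linarith⟩
  · rw [abs_neg, abs_of_pos (by linarith only [ht₁0, ht₁t₂] : 0 < t₂)]
    linear_combination ht₂
  · rw [abs_neg, abs_of_pos ht₁0]
    linear_combination ht₁
  · intro x hx
    have hxneg : x < 0 := by
      by_contra h
      push_neg at h
      have h1 : 0 ≤ |x| ^ β := Real.rpow_nonneg (abs_nonneg x) β
      have h2 := mul_nonneg ha.le h1
      have h3 := mul_nonneg hb.le h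
      linarith only [hx, h2, h3, hc]
    have habs : |x| = -x := abs_of_neg hxneg
    have hzero : a * (-x) ^ β - b * (-x) + c = 0 := by
      rw [habs] at hx; linear_combination hx
    have hxpos : 0 < -x := by linarith
    rcases lt_trichotomy (-x) t₁ with h1 | h1 | h1
    · exact absurd (aux_three_zeros a b c β ha hβ1 hxpos.le h1 ht₁t₂ hzero ht₁ ht₂) id
    · right; linarith
    · rcases lt_trichotomy (-x) t₂ with h2 | h2 | h2
      · exact absurd (aux_three_zeros a b c β ha hβ1 ht₁0.le h1 h2 ht₁ hzero ht₂) id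
      · left; linarith
      · exact absurd (aux_three_zeros a b c β ha hβ1 ht₁0.le ht₁t₂ h2 ht₁ ht₂ hzero) id
end

section
/- Let g(x) = a|x|^β + b x + c with β ∈ (1,2], a < 0, b > 0, c < 0. If there exists r > 1/b such that b + a(-c r)^{β-1} > 1/r, then the equation g(x) = 0 has exactly two real solutions, both positive, and the smaller solution x₋ satisfies x₋ ≤ -c/(b + a(-c r)^{β-1}). -/
open Real Set

/-- No nonpositive root. -/
private lemma g_neg_of_nonpos (a b c β : ℝ) (ha : a < 0) (hb : 0 < b) (hc : c < 0)
    {x : ℝ} (hx : x ≤ 0) : a * |x| ^ β + b * x + c < 0 := by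
  have h1 : a * |x| ^ β ≤ 0 := by
    have : (0:ℝ) ≤ |x| ^ β := Real.rpow_nonneg (abs_nonneg x) β
    nlinarith
  have h2 : b * x ≤ 0 := mul_nonpos_of_nonneg_of_nonpos hb.le hx
  linarith

/-- Three distinct nonnegative zeros are impossible (strict concavity). -/
private lemma three_zeros_false (a b c β : ℝ) (hβ1 : 1 < β) (ha : a < 0)
    {u v w : ℝ} (hu : 0 ≤ u) (huv : u < v) (hvw : v < w)
    (gu : a * |u| ^ β + b * u + c = 0) (gv : a * |v| ^ β + b * v + c = 0)
    (gw : a * |w| ^ β + b * w + c = 0) : False := by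
  have hv : 0 ≤ v := le_trans hu huv.le
  have hw : 0 ≤ w := le_trans hv hvw.le
  rw [abs_of_nonneg hu] at gu
  rw [abs_of_nonneg hv] at gv
  rw [abs_of_nonneg hw] at gw
  have hwu : 0 < w - u := by linarith
  set t : ℝ := (w - v) / (w - u) with ht
  set s : ℝ := (v - u) / (w - u) with hs
  have hts : t + s = 1 := by rw [ht, hs]; field_simp; ring
  have htpos : 0 < t := div_pos (by linarith) hwu
  have hspos : 0 < s := div_pos (by linarith) hwu
  have hcomb : t * u + s * w = v := by
    rw [ht, hs]; field_simp; ring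
  have hconv := (strictConvexOn_rpow hβ1).2 (Set.mem_Ici.mpr hu) (Set.mem_Ici.mpr hw)
    (by linarith : u ≠ w) htpos hspos hts
  simp only [smul_eq_mul, hcomb] at hconv
  -- hconv : v ^ β < t * u ^ β + s * w ^ β
  have key : a * (t * u ^ β + s * w ^ β) + b * v + c = 0 := by
    linear_combination t * gu + s * gw - b * hcomb - c * hts
  have h1 : a * (t * u ^ β + s * w ^ β) < a * v ^ β :=
    mul_lt_mul_of_neg_left hconv ha
  linarith [gv, key, h1]

/-- Lemma A.1(ii): for g(x) = a|x|^β + bx + c with a < 0, b > 0, c < 0 and β ∈ (1,2],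
if there is r > 1/b with b + a(-cr)^(β-1) > 1/r, then g = 0 has exactly two real
solutions, both positive, and the smaller one x₋ satisfies
x₋ ≤ -c/(b + a(-cr)^(β-1)). -/
theorem stmt1 (a b c r β : ℝ) (hβ : β ∈ Set.Ioc (1:ℝ) 2)
    (ha : a < 0) (hb : 0 < b) (hc : c < 0)
    (hr : 1 / b < r) (hcond : 1 / r < b + a * (-(c * r)) ^ (β - 1)) :
    ∃ x₁ x₂ : ℝ, x₁ < x₂ ∧ 0 < x₁ ∧ 0 < x₂ ∧
      a * |x₁| ^ β + b * x₁ + c = 0 ∧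
      a * |x₂| ^ β + b * x₂ + c = 0 ∧
      (∀ x : ℝ, a * |x| ^ β + b * x + c = 0 → x = x₁ ∨ x = x₂) ∧
      x₁ ≤ -(c / (b + a * (-(c * r)) ^ (β - 1))) := by
  obtain ⟨hβ1, hβ2⟩ := hβ
  have hβ1' : 0 < β - 1 := by linarith
  have hβ0 : 0 < β := by linarith
  have hr0 : 0 < r := lt_trans (by positivity) hr
  have hK : 0 < -(c * r) := by nlinarith
  set D : ℝ := b + a * (-(c * r)) ^ (β - 1) with hD
  have hD0 : 0 < D := lt_trans (by positivity) hcond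
  set xs : ℝ := -(c / D) with hxs
  have hxs0 : 0 < xs := by
    rw [hxs]
    have : c / D < 0 := div_neg_of_neg_of_pos hc hD0
    linarith
  -- xs < -(c*r)
  have hxsK : xs < -(c * r) := by
    rw [hxs, neg_div' ]
    rw [div_lt_iff₀ hD0]
    have h1 : 1 < r * D := by
      have := (div_lt_iff₀ hr0).mp hcond
      linarith
    nlinarith
  -- g is continuous
  have hg : Continuous (fun x : ℝ => a * |x| ^ β + b * x + c) := by
    have h1 : Continuous (fun x : ℝ => |x| ^ β) :=
      (Real.continuous_rpow_const hβ0.le).comp continuous_abs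
    continuity
  -- g xs > 0
  have hgxs : 0 < a * |xs| ^ β + b * xs + c := by
    rw [abs_of_nonneg hxs0.le]
    have hrw : xs ^ β = xs ^ (β - 1) * xs := by
      have h := Real.rpow_add hxs0 (β - 1) 1
      rw [Real.rpow_one, show β - 1 + 1 = β by ring] at h
      exact h
    rw [hrw]
    have h1 : xs ^ (β - 1) < (-(c * r)) ^ (β - 1) :=
      Real.rpow_lt_rpow hxs0.le hxsK hβ1'
    have h2 : a * (-(c * r)) ^ (β - 1) < a * xs ^ (β - 1) :=
      mul_lt_mul_of_neg_left h1 ha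
    have h3 : D < a * xs ^ (β - 1) + b := by rw [hD] at *; linarith
    have h4 : xs * D < xs * (a * xs ^ (β - 1) + b) :=
      mul_lt_mul_of_pos_left h3 hxs0
    have h5 : xs * D = -c := by
      rw [hxs]; field_simp
    nlinarith
  -- large M with g M < 0
  set M : ℝ := max xs ((b / (-a)) ^ (1 / (β - 1))) + 1 with hM
  have hMxs : xs < M := by
    have := le_max_left xs ((b / (-a)) ^ (1 / (β - 1)))
    rw [hM]; linarith
  have hM0 : 0 < M := lt_trans hxs0 hMxs
  have hMgt : (b / (-a)) ^ (1 / (β - 1)) < M := by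
    have := le_max_right xs ((b / (-a)) ^ (1 / (β - 1)))
    rw [hM]; linarith
  have hMpow : b / (-a) < M ^ (β - 1) := by
    have hma : (0:ℝ) < -a := by linarith
    have hbase : (0:ℝ) ≤ (b / (-a)) ^ (1 / (β - 1)) :=
      Real.rpow_nonneg (div_pos hb hma).le _
    have h1 := Real.rpow_lt_rpow hbase hMgt hβ1'
    have h2 : ((b / (-a)) ^ (1 / (β - 1))) ^ (β - 1) = b / (-a) := by
      rw [← Real.rpow_mul (div_pos hb hma).le]
      rw [one_div, inv_mul_cancel₀ (ne_of_gt hβ1'), Real.rpow_one]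
    rwa [h2] at h1
  have hgM : a * |M| ^ β + b * M + c < 0 := by
    rw [abs_of_nonneg hM0.le]
    have hrw : M ^ β = M ^ (β - 1) * M := by
      have h := Real.rpow_add hM0 (β - 1) 1
      rw [Real.rpow_one, show β - 1 + 1 = β by ring] at h
      exact h
    rw [hrw]
    have h1 : b < (-a) * M ^ (β - 1) := by
      rw [div_lt_iff₀ (by linarith : (0:ℝ) < -a)] at hMpow
      linarith
    have h2 : a * M ^ (β - 1) + b < 0 := by nlinarith
    nlinarith
  -- IVT on [0, xs]
  have hc0 : a * |(0:ℝ)| ^ β + b * 0 + c < 0 := by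
    simpa using g_neg_of_nonpos a b c β ha hb hc le_rfl
  obtain ⟨x₁, hx₁mem, hx₁⟩ : ∃ x₁ ∈ Ioo (0:ℝ) xs,
      a * |x₁| ^ β + b * x₁ + c = 0 := by
    have := intermediate_value_Ioo (le_of_lt hxs0)
      (hg.continuousOn : ContinuousOn (fun x : ℝ => a * |x| ^ β + b * x + c) (Icc 0 xs))
    have h0mem : (0:ℝ) ∈ Ioo (a * |(0:ℝ)| ^ β + b * 0 + c) (a * |xs| ^ β + b * xs + c) :=
      ⟨hc0, hgxs⟩
    obtain ⟨x₁, hmem, heq⟩ := this h0mem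
    exact ⟨x₁, hmem, heq⟩
  obtain ⟨x₂, hx₂mem, hx₂⟩ : ∃ x₂ ∈ Ioo xs M,
      a * |x₂| ^ β + b * x₂ + c = 0 := by
    have := intermediate_value_Ioo' (le_of_lt hMxs)
      (hg.continuousOn : ContinuousOn (fun x : ℝ => a * |x| ^ β + b * x + c) (Icc xs M))
    have h0mem : (0:ℝ) ∈ Ioo (a * |M| ^ β + b * M + c) (a * |xs| ^ β + b * xs + c) :=
      ⟨hgM, hgxs⟩
    obtain ⟨x₂, hmem, heq⟩ := this h0mem
    exact ⟨x₂, hmem, heq⟩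
  obtain ⟨hx₁0, hx₁xs⟩ := hx₁mem
  obtain ⟨hxsx₂, hx₂M⟩ := hx₂mem
  have hx₁x₂ : x₁ < x₂ := lt_trans hx₁xs hxsx₂
  refine ⟨x₁, x₂, hx₁x₂, hx₁0, lt_trans hx₁0 hx₁x₂, hx₁, hx₂, ?_, le_of_lt hx₁xs⟩
  intro x hx
  have hx0 : 0 < x := by
    by_contra h
    push_neg at h
    exact absurd hx (ne_of_lt (g_neg_of_nonpos a b c β ha hb hc h))
  rcases lt_trichotomy x x₁ with h1 | h1 | h1
  · exact absurd (three_zeros_false a b c β hβ1 ha hx0.le h1 hx₁x₂ hx hx₁ hx₂) id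
  · exact Or.inl h1
  rcases lt_trichotomy x x₂ with h2 | h2 | h2
  · exact absurd (three_zeros_false a b c β hβ1 ha hx₁0.le h1 h2 hx₁ hx hx₂) id
  · exact Or.inr h2
  · exact absurd (three_zeros_false a b c β hβ1 ha hx₁0.le hx₁x₂ h2 hx₁ hx₂ hx) id
end

section
/- Let X be a real-valued random variable with mean μ and variance σ². Then for any x, y ∈ ℝ and any 0 < a₋ ≤ a₊, the expectation E[ sup_{v ∈ [a₋, a₊]} sign(x)·(X - y)/v ] is at most sign(x)·(μ - y)/a₊ + ((a₊ - a₋)/(a₋ a₊))·(σ + |μ - y|). -/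
open MeasureTheory

lemma sup_div_eq (z am ap : ℝ) (ham : 0 < am) (hle : am ≤ ap) :
    (⨆ v : Set.Icc am ap, z / (v : ℝ)) =
      z / ap + ((ap - am) / (am * ap)) * max z 0 := by
  have hap : 0 < ap := ham.trans_le hle
  have hbound : ∀ v : Set.Icc am ap, z / (v : ℝ) ≤ max (z / am) (z / ap) := by
    rintro ⟨v, hv1, hv2⟩
    have hv : 0 < v := ham.trans_le hv1
    rcases le_or_gt 0 z with hz | hz
    · exact le_max_of_le_left (div_le_div_of_nonneg_left hz ham hv1)
    · refine le_max_of_le_right ?_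
      rw [div_le_div_iff₀ hv hap]
      exact mul_le_mul_of_nonpos_left hv2 hz.le
  haveI : Nonempty ↑(Set.Icc am ap) := ⟨⟨am, le_refl am, hle⟩⟩
  have hsup : (⨆ v : Set.Icc am ap, z / (v : ℝ)) = max (z / am) (z / ap) := by
    refine le_antisymm (ciSup_le hbound) (max_le ?_ ?_)
    · exact le_ciSup_of_le ⟨max (z / am) (z / ap), Set.forall_mem_range.2 hbound⟩
        ⟨am, le_refl am, hle⟩ le_rfl
    · exact le_ciSup_of_le ⟨max (z / am) (z / ap), Set.forall_mem_range.2 hbound⟩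
        ⟨ap, hle, le_refl ap⟩ le_rfl
  rw [hsup]
  rcases le_or_gt 0 z with hz | hz
  · rw [max_eq_left hz, max_eq_left]
    · field_simp
      ring
    · rw [div_le_div_iff₀ hap ham]
      exact mul_le_mul_of_nonneg_left hle hz
  · rw [max_eq_right hz.le, max_eq_right]
    · simp
    · rw [div_le_div_iff₀ ham hap]
      exact mul_le_mul_of_nonpos_left hle hz.le

/-- Lemma A.2: for a random variable X with mean μ and variance σ²,
E[ sup_{v ∈ [a₋,a₊]} sign(x)(X - y)/v ]
  ≤ sign(x)(μ - y)/a₊ + ((a₊ - a₋)/(a₋ a₊)) (σ + |μ - y|). -/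
theorem stmt2 {Ω : Type*} [MeasureSpace Ω] [IsProbabilityMeasure (volume : Measure Ω)]
    (X : Ω → ℝ) (μ₀ σ : ℝ) (hσ : 0 ≤ σ)
    (hint : Integrable X) (hsq : Integrable (fun ω => (X ω - μ₀) ^ 2))
    (hmean : (∫ ω, X ω) = μ₀) (hvar : (∫ ω, (X ω - μ₀) ^ 2) = σ ^ 2)
    (x y am ap : ℝ) (ham : 0 < am) (hle : am ≤ ap) :
    (∫ ω, ⨆ v : Set.Icc am ap, Real.sign x * (X ω - y) / (v : ℝ)) ≤
      Real.sign x * (μ₀ - y) / ap + ((ap - am) / (am * ap)) * (σ + |μ₀ - y|) := by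
  have hap : 0 < ap := ham.trans_le hle
  set s := Real.sign x with hs
  have hs1 : |s| ≤ 1 := by
    rcases lt_trichotomy x 0 with h | h | h
    · rw [hs, Real.sign_of_neg h]; norm_num
    · rw [hs, h, Real.sign_zero]; norm_num
    · rw [hs, Real.sign_of_pos h]; norm_num
  set Z : Ω → ℝ := fun ω => s * (X ω - y) with hZdef
  have hZ : Integrable Z := (hint.sub (integrable_const y)).const_mul s
  have hmaxZ : Integrable (fun ω => max (Z ω) 0) := hZ.pos_part
  have heq : (fun ω => ⨆ v : Set.Icc am ap, s * (X ω - y) / (v : ℝ))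
      = fun ω => Z ω / ap + ((ap - am) / (am * ap)) * max (Z ω) 0 :=
    funext fun ω => sup_div_eq (Z ω) am ap ham hle
  have hZint : (∫ ω, Z ω) = s * (μ₀ - y) := by
    rw [hZdef]
    rw [integral_const_mul, integral_sub hint (integrable_const y), hmean, integral_const]
    simp
  rw [heq, integral_add (hZ.div_const ap) (hmaxZ.const_mul _), integral_div, hZint,
    integral_const_mul]
  gcongr
  -- ∫ max Z 0 ≤ σ + |μ₀ - y|
  have habs : Integrable (fun ω => |X ω - μ₀|) := (hint.sub (integrable_const μ₀)).abs
  have h1 : (∫ ω, max (Z ω) 0) ≤ ∫ ω, |X ω - μ₀| + |μ₀ - y| := by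
    refine integral_mono hmaxZ (habs.add (integrable_const _)) fun ω => ?_
    have h2 : max (Z ω) 0 ≤ |Z ω| := max_le (le_abs_self _) (abs_nonneg _)
    have h3 : |Z ω| ≤ |X ω - y| := by
      rw [hZdef, abs_mul]
      calc |s| * |X ω - y| ≤ 1 * |X ω - y| :=
            mul_le_mul_of_nonneg_right hs1 (abs_nonneg _)
        _ = |X ω - y| := one_mul _
    have h4 : |X ω - y| ≤ |X ω - μ₀| + |μ₀ - y| := by
      have := abs_sub_abs_le_abs_sub (X ω - y) 0
      calc |X ω - y| = |(X ω - μ₀) + (μ₀ - y)| := by ring_nf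
        _ ≤ |X ω - μ₀| + |μ₀ - y| := abs_add_le _ _
    exact h2.trans (h3.trans h4)
  rw [integral_add habs (integrable_const _), integral_const] at h1
  simp only [measure_univ, probReal_univ, ENNReal.toReal_one, one_smul, smul_eq_mul] at h1
  have h5 : (∫ ω, |X ω - μ₀|) ≤ σ := by
    have hmem : MemLp (fun ω => |X ω - μ₀|) 2 (volume : Measure Ω) := by
      refine (memLp_two_iff_integrable_sq ?_).2 ?_
      · exact (hint.sub (integrable_const μ₀)).abs.aestronglyMeasurable
      · simpa [sq_abs] using hsq
    have hconj : Real.HolderConjugate 2 2 := Real.HolderConjugate.two_two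
    have := integral_mul_le_Lp_mul_Lq_of_nonneg (μ := (volume : Measure Ω)) hconj
      (f := fun ω => |X ω - μ₀|) (g := fun _ => 1)
      (Filter.Eventually.of_forall fun ω => abs_nonneg _)
      (Filter.Eventually.of_forall fun ω => zero_le_one)
      (by simpa using hmem) (by simpa using memLp_const 1)
    simp only [mul_one, Real.one_rpow] at this
    have hpow : ∀ ω, |X ω - μ₀| ^ (2 : ℝ) = (X ω - μ₀) ^ 2 := fun ω => by
      rw [show (2:ℝ) = ((2:ℕ):ℝ) by norm_num, Real.rpow_natCast, sq_abs]
    calc (∫ ω, |X ω - μ₀|) ≤ (∫ ω, |X ω - μ₀| ^ (2:ℝ)) ^ ((1:ℝ)/2) * (∫ (_ : Ω), (1:ℝ)) ^ ((1:ℝ)/2) := this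
      _ = σ := by
          simp only [hpow, hvar, integral_const, measure_univ, probReal_univ, ENNReal.toReal_one, one_smul]
          rw [Real.one_rpow, mul_one, ← Real.sqrt_eq_rpow, Real.sqrt_sq hσ]
  linarith
end

section
/- Let ε, v, α > 0 with |ε| ≤ v/α, let u ∈ ℝ, and let ψ₊(t) = log(1 + t + t²/2). Then ψ₊(s·α(ε - u)/v) + ψ₊(-s·αε/v) ≤ log(1 - α|u|/v + 2α²u²/v² + 2α²ε²/v²) whenever s = sign(u), provided the argument of the last logarithm is positive; consequently it is at most -α|u|/(3v) + 2α²u²/v² + log(1 + 2α²ε²/v²). -/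
lemma aux7 (t m : ℝ) (ht : t ^ 2 ≤ 1) (hm : 0 ≤ m)
    (hpos : 0 < 1 - m + 2 * m ^ 2 + 2 * t ^ 2) :
    Real.log (1 + (t - m) + (t - m) ^ 2 / 2) + Real.log (1 + -t + (-t) ^ 2 / 2) ≤
        Real.log (1 - m + 2 * m ^ 2 + 2 * t ^ 2) ∧
      Real.log (1 + (t - m) + (t - m) ^ 2 / 2) + Real.log (1 + -t + (-t) ^ 2 / 2) ≤
        -(m / 3) + 2 * m ^ 2 + Real.log (1 + 2 * t ^ 2) := by
  have hA : 0 < 1 + (t - m) + (t - m) ^ 2 / 2 := by nlinarith [sq_nonneg (t - m + 1)]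
  have hB : 0 < 1 + -t + (-t) ^ 2 / 2 := by nlinarith [sq_nonneg (1 - t)]
  have ht1 : -1 ≤ t := by nlinarith
  have ht2 : t ≤ 1 := by nlinarith
  have hAB : (1 + (t - m) + (t - m) ^ 2 / 2) * (1 + -t + (-t) ^ 2 / 2) ≤
      1 - m + 2 * m ^ 2 + 2 * t ^ 2 := by
    nlinarith [sq_nonneg (t * m - t),
      mul_nonneg (mul_nonneg hm hm) (by linarith : (0:ℝ) ≤ 1 + t),
      mul_nonneg (mul_nonneg (by linarith : (0:ℝ) ≤ 1 - t) (by linarith : (0:ℝ) ≤ 1 + t)) (sq_nonneg (t - m)),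
      mul_nonneg (mul_nonneg (by linarith : (0:ℝ) ≤ 1 - t) (by linarith : (0:ℝ) ≤ 1 + t)) (sq_nonneg m),
      sq_nonneg (t - m), sq_nonneg (t + m), sq_nonneg m, sq_nonneg t]
  have h1 : Real.log (1 + (t - m) + (t - m) ^ 2 / 2) + Real.log (1 + -t + (-t) ^ 2 / 2) ≤
      Real.log (1 - m + 2 * m ^ 2 + 2 * t ^ 2) := by
    rw [← Real.log_mul hA.ne' hB.ne']
    exact Real.log_le_log (by positivity) hAB
  refine ⟨h1, h1.trans ?_⟩
  have hX : (0:ℝ) < 1 + 2 * t ^ 2 := by positivity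
  have hX2 : 2 * t ^ 2 ≤ 2 := by nlinarith
  have hlog := Real.log_le_sub_one_of_pos
    (show 0 < (1 - m + 2 * m ^ 2 + 2 * t ^ 2) / (1 + 2 * t ^ 2) by positivity)
  rw [Real.log_div hpos.ne' hX.ne'] at hlog
  have hdiv : (1 - m + 2 * m ^ 2 + 2 * t ^ 2) / (1 + 2 * t ^ 2) - 1 ≤ -(m / 3) + 2 * m ^ 2 := by
    rw [div_sub_one hX.ne', div_le_iff₀ hX]
    nlinarith [mul_nonneg hm (by linarith : (0:ℝ) ≤ 2 - 2 * t ^ 2),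
      mul_nonneg (mul_nonneg hm hm) (sq_nonneg t)]
  linarith

/-- Key pointwise bound: with ψ₊(t) = log(1 + t + t²/2), s = sign(u),
and |ε| ≤ v/α, the sum ψ₊(s α(ε-u)/v) + ψ₊(-s αε/v) is bounded by
log(1 - α|u|/v + 2α²u²/v² + 2α²ε²/v²) (when that argument is positive),
and consequently by -α|u|/(3v) + 2α²u²/v² + log(1 + 2α²ε²/v²). -/
theorem stmt7 (ε v α u : ℝ) (hv : 0 < v) (hα : 0 < α) (hε : |ε| ≤ v / α)
    (hpos : 0 < 1 - α * |u| / v + 2 * α ^ 2 * u ^ 2 / v ^ 2 + 2 * α ^ 2 * ε ^ 2 / v ^ 2) :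
    (fun s : ℝ =>
        Real.log (1 + s * (α * (ε - u) / v) + (s * (α * (ε - u) / v)) ^ 2 / 2) +
          Real.log (1 + (-(s * (α * ε / v))) + (-(s * (α * ε / v))) ^ 2 / 2) ≤
            Real.log (1 - α * |u| / v + 2 * α ^ 2 * u ^ 2 / v ^ 2
              + 2 * α ^ 2 * ε ^ 2 / v ^ 2) ∧
        Real.log (1 + s * (α * (ε - u) / v) + (s * (α * (ε - u) / v)) ^ 2 / 2) +
          Real.log (1 + (-(s * (α * ε / v))) + (-(s * (α * ε / v))) ^ 2 / 2) ≤
            -(α * |u| / (3 * v)) + 2 * α ^ 2 * u ^ 2 / v ^ 2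
              + Real.log (1 + 2 * α ^ 2 * ε ^ 2 / v ^ 2))
      (if 0 ≤ u then (1:ℝ) else -1) := by
  have hε2 : ε ^ 2 ≤ (v / α) ^ 2 := sq_le_sq' (neg_le_of_abs_le hε) (le_of_abs_le hε)
  have ht : (α * ε / v) ^ 2 ≤ 1 := by
    calc (α * ε / v) ^ 2 = (α / v) ^ 2 * ε ^ 2 := by ring
      _ ≤ (α / v) ^ 2 * (v / α) ^ 2 := mul_le_mul_of_nonneg_left hε2 (by positivity)
      _ = 1 := by field_simp
  rcases le_or_gt 0 u with hu | hu
  · simp only [if_pos hu]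
    have habs : |u| = u := abs_of_nonneg hu
    rw [habs] at hpos ⊢
    have hm : 0 ≤ α * u / v := by positivity
    have hpos' : 0 < 1 - (α * u / v) + 2 * (α * u / v) ^ 2 + 2 * (α * ε / v) ^ 2 := by
      nlinarith [hpos]
    have h := aux7 (α * ε / v) (α * u / v) ht hm hpos'
    have eA : 1 + 1 * (α * (ε - u) / v) + (1 * (α * (ε - u) / v)) ^ 2 / 2 =
        1 + (α * ε / v - α * u / v) + (α * ε / v - α * u / v) ^ 2 / 2 := by ring
    have eB : 1 + -(1 * (α * ε / v)) + (-(1 * (α * ε / v))) ^ 2 / 2 =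
        1 + -(α * ε / v) + (-(α * ε / v)) ^ 2 / 2 := by ring
    have eC : 1 - α * u / v + 2 * α ^ 2 * u ^ 2 / v ^ 2 + 2 * α ^ 2 * ε ^ 2 / v ^ 2 =
        1 - (α * u / v) + 2 * (α * u / v) ^ 2 + 2 * (α * ε / v) ^ 2 := by ring
    have eD : -(α * u / (3 * v)) + 2 * α ^ 2 * u ^ 2 / v ^ 2 =
        -(α * u / v / 3) + 2 * (α * u / v) ^ 2 := by ring
    have eE : (1 : ℝ) + 2 * α ^ 2 * ε ^ 2 / v ^ 2 = 1 + 2 * (α * ε / v) ^ 2 := by ring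
    rw [eA, eB, eC, eD, eE]
    exact h
  · simp only [if_neg (not_le.mpr hu)]
    have habs : |u| = -u := abs_of_neg hu
    rw [habs] at hpos ⊢
    have hm : 0 ≤ -(α * u / v) := by
      have : α * u / v ≤ 0 := div_nonpos_of_nonpos_of_nonneg (by nlinarith) hv.le
      linarith
    have ht' : (-(α * ε / v)) ^ 2 ≤ 1 := by rw [neg_sq]; exact ht
    have hpos' : 0 < 1 - (-(α * u / v)) + 2 * (-(α * u / v)) ^ 2 + 2 * (-(α * ε / v)) ^ 2 := by
      nlinarith [hpos]
    have h := aux7 (-(α * ε / v)) (-(α * u / v)) ht' hm hpos'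
    have eA : 1 + -1 * (α * (ε - u) / v) + (-1 * (α * (ε - u) / v)) ^ 2 / 2 =
        1 + (-(α * ε / v) - -(α * u / v)) + (-(α * ε / v) - -(α * u / v)) ^ 2 / 2 := by ring
    have eB : 1 + -(-1 * (α * ε / v)) + (-(-1 * (α * ε / v))) ^ 2 / 2 =
        1 + - -(α * ε / v) + (- -(α * ε / v)) ^ 2 / 2 := by ring
    have eC : 1 - α * -u / v + 2 * α ^ 2 * u ^ 2 / v ^ 2 + 2 * α ^ 2 * ε ^ 2 / v ^ 2 =
        1 - (-(α * u / v)) + 2 * (-(α * u / v)) ^ 2 + 2 * (-(α * ε / v)) ^ 2 := by ring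
    have eD : -(α * -u / (3 * v)) + 2 * α ^ 2 * u ^ 2 / v ^ 2 =
        -(-(α * u / v) / 3) + 2 * (-(α * u / v)) ^ 2 := by ring
    have eE : (1 : ℝ) + 2 * α ^ 2 * ε ^ 2 / v ^ 2 = 1 + 2 * (-(α * ε / v)) ^ 2 := by ring
    rw [eA, eB, eC, eD, eE]
    exact h
end

section
/- Let f : ℝ² → ℝ² be continuous on the rectangle K = [θ₋, θ₊] × [v₋, v₊], f = (f₁, f₂). Suppose f₁(θ₋, v) ≥ 0 and f₁(θ₊, v) ≤ 0 for all v ∈ [v₋, v₊], and f₂(θ, v₋) ≥ 0 and f₂(θ, v₊) ≤ 0 for all θ ∈ [θ₋, θ₊]. Then there exists (θ̂, v̂) ∈ K with f₁(θ̂, v̂) = 0 and f₂(θ̂, v̂) = 0. -/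
/-- Edge label function: 1 if the edge joins an `A = (true,true)` corner to a `B`-corner
(one with first component `false`). -/
def pmAB (p q : Bool × Bool) : ZMod 2 :=
  if (p = (true, true) ∧ q.1 = false) ∨ (q = (true, true) ∧ p.1 = false) then 1 else 0

lemma pmCellParity (a b c d : Bool × Bool)
    (h : (a.1 = b.1 ∧ a.1 = c.1 ∧ a.1 = d.1) ∨ (a.2 = b.2 ∧ a.2 = c.2 ∧ a.2 = d.2)) :
    pmAB a b + pmAB c d + pmAB a c + pmAB b d = 0 := by
  revert h; revert a b c d; decide

lemma pmGrid (n : ℕ) (hn : 0 < n) (s t : ℕ → ℕ → Bool)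
    (hs0 : ∀ j, j ≤ n → s 0 j = true) (hsn : ∀ j, j ≤ n → s n j = false)
    (ht0 : ∀ i, i ≤ n → t i 0 = true) (htn : ∀ i, i ≤ n → t i n = false) :
    ∃ i, i < n ∧ ∃ j, j < n ∧
      ¬(s i j = s (i+1) j ∧ s i j = s i (j+1) ∧ s i j = s (i+1) (j+1)) ∧
      ¬(t i j = t (i+1) j ∧ t i j = t i (j+1) ∧ t i j = t (i+1) (j+1)) := by
  by_contra hcon
  set l : ℕ → ℕ → Bool × Bool := fun i j => (s i j, t i j) with hl
  set eh : ℕ → ℕ → ZMod 2 := fun i j => pmAB (l i j) (l (i+1) j) with heh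
  set ev : ℕ → ℕ → ZMod 2 := fun i j => pmAB (l i j) (l i (j+1)) with hev
  -- every cell contributes 0
  have hcell : ∀ i, i < n → ∀ j, j < n →
      eh i j + eh i (j+1) + ev i j + ev (i+1) j = 0 := by
    intro i hi j hj
    rcases Classical.em (s i j = s (i+1) j ∧ s i j = s i (j+1) ∧ s i j = s (i+1) (j+1)) with hs | hs
    · exact pmCellParity _ _ _ _ (Or.inl hs)
    · rcases Classical.em (t i j = t (i+1) j ∧ t i j = t i (j+1) ∧ t i j = t (i+1) (j+1)) with ht | ht
      · exact pmCellParity _ _ _ _ (Or.inr ht)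
      · exact absurd ⟨i, hi, j, hj, hs, ht⟩ hcon
  have htele : ∀ (F : ℕ → ZMod 2) (m : ℕ),
      (∑ j ∈ Finset.range m, (F j + F (j+1))) = F 0 + F m := by
    intro F m
    have h1 : ∀ j, F j + F (j+1) = F (j+1) - F j := by
      intro j; rw [CharTwo.sub_eq_add, add_comm]
    calc (∑ j ∈ Finset.range m, (F j + F (j+1)))
        = ∑ j ∈ Finset.range m, (F (j+1) - F j) := by
          exact Finset.sum_congr rfl fun j _ => h1 j
      _ = F m - F 0 := Finset.sum_range_sub F m
      _ = F 0 + F m := by rw [CharTwo.sub_eq_add, add_comm]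
  -- total sum is zero
  have hzero : (∑ i ∈ Finset.range n, ∑ j ∈ Finset.range n,
      (eh i j + eh i (j+1) + ev i j + ev (i+1) j)) = 0 :=
    Finset.sum_eq_zero fun i hi => Finset.sum_eq_zero fun j hj =>
      hcell i (Finset.mem_range.1 hi) j (Finset.mem_range.1 hj)
  -- but the total sum is one
  have hsplit : (∑ i ∈ Finset.range n, ∑ j ∈ Finset.range n,
      (eh i j + eh i (j+1) + ev i j + ev (i+1) j))
      = (∑ i ∈ Finset.range n, (eh i 0 + eh i n))
        + (∑ j ∈ Finset.range n, (ev 0 j + ev n j)) := by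
    have h1 : ∀ i, (∑ j ∈ Finset.range n, (eh i j + eh i (j+1) + ev i j + ev (i+1) j))
        = (eh i 0 + eh i n) + ∑ j ∈ Finset.range n, (ev i j + ev (i+1) j) := by
      intro i
      rw [← htele (fun j => eh i j) n, ← Finset.sum_add_distrib]
      exact Finset.sum_congr rfl fun j _ => by ring
    calc (∑ i ∈ Finset.range n, ∑ j ∈ Finset.range n,
          (eh i j + eh i (j+1) + ev i j + ev (i+1) j))
        = ∑ i ∈ Finset.range n,
            ((eh i 0 + eh i n) + ∑ j ∈ Finset.range n, (ev i j + ev (i+1) j)) :=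
          Finset.sum_congr rfl fun i _ => h1 i
      _ = (∑ i ∈ Finset.range n, (eh i 0 + eh i n))
          + ∑ i ∈ Finset.range n, ∑ j ∈ Finset.range n, (ev i j + ev (i+1) j) :=
          Finset.sum_add_distrib
      _ = (∑ i ∈ Finset.range n, (eh i 0 + eh i n))
          + ∑ j ∈ Finset.range n, ∑ i ∈ Finset.range n, (ev i j + ev (i+1) j) := by
          rw [Finset.sum_comm]
      _ = (∑ i ∈ Finset.range n, (eh i 0 + eh i n))
          + ∑ j ∈ Finset.range n, (ev 0 j + ev n j) := by
          congr 1
          exact Finset.sum_congr rfl fun j _ => htele (fun i => ev i j) n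
  -- boundary computations
  have hehn : ∀ i, i < n → eh i n = 0 := by
    intro i hi
    have h1 : t i n = false := htn i (le_of_lt hi)
    have h2 : t (i+1) n = false := htn (i+1) hi
    simp [heh, hl, pmAB, h1, h2]
  have hev0 : ∀ j, j < n → ev 0 j = 0 := by
    intro j hj
    have h1 : s 0 j = true := hs0 j (le_of_lt hj)
    have h2 : s 0 (j+1) = true := hs0 (j+1) hj
    simp [hev, hl, pmAB, h1, h2]
  have hevn : ∀ j, j < n → ev n j = 0 := by
    intro j hj
    have h1 : s n j = false := hsn j (le_of_lt hj)
    have h2 : s n (j+1) = false := hsn (j+1) hj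
    simp [hev, hl, pmAB, h1, h2]
  have hbot : (∑ i ∈ Finset.range n, eh i 0) = 1 := by
    set χ : ℕ → ZMod 2 := fun i => if s i 0 then 0 else 1 with hχ
    have h1 : ∀ i, i < n → eh i 0 = χ (i+1) - χ i := by
      intro i hi
      have ht1 : t i 0 = true := ht0 i (le_of_lt hi)
      have ht2 : t (i+1) 0 = true := ht0 (i+1) hi
      cases h1 : s i 0 <;> cases h2 : s (i+1) 0 <;>
        simp [heh, hl, hχ, pmAB, h1, h2, ht1, ht2] <;> decide
    calc (∑ i ∈ Finset.range n, eh i 0)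
        = ∑ i ∈ Finset.range n, (χ (i+1) - χ i) :=
          Finset.sum_congr rfl fun i hi => h1 i (Finset.mem_range.1 hi)
      _ = χ n - χ 0 := Finset.sum_range_sub χ n
      _ = 1 := by simp [hχ, hsn 0 hn.le, hs0 0 hn.le]
  have hone : (∑ i ∈ Finset.range n, (eh i 0 + eh i n))
      + (∑ j ∈ Finset.range n, (ev 0 j + ev n j)) = 1 := by
    have e1 : (∑ i ∈ Finset.range n, (eh i 0 + eh i n)) = ∑ i ∈ Finset.range n, eh i 0 := by
      refine Finset.sum_congr rfl fun i hi => ?_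
      rw [hehn i (Finset.mem_range.1 hi), add_zero]
    have e2 : (∑ j ∈ Finset.range n, (ev 0 j + ev n j)) = 0 := by
      refine Finset.sum_eq_zero fun j hj => ?_
      rw [hev0 j (Finset.mem_range.1 hj), hevn j (Finset.mem_range.1 hj), add_zero]
    rw [e1, e2, add_zero, hbot]
  rw [hsplit, hone] at hzero
  exact one_ne_zero hzero

lemma pmBool4 : ∀ x y z w : Bool, ¬(x = y ∧ x = z ∧ x = w) →
    (x = true ∨ y = true ∨ z = true ∨ w = true) ∧
    (x = false ∨ y = false ∨ z = false ∨ w = false) := by decide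

/-- Two-dimensional Poincaré–Miranda theorem (reversed sign convention). -/
theorem stmt16 (f₁ f₂ : ℝ → ℝ → ℝ) (θm θp vm vp : ℝ) (hθ : θm < θp) (hv : vm < vp)
    (hcont : ContinuousOn (fun p : ℝ × ℝ => (f₁ p.1 p.2, f₂ p.1 p.2))
      (Set.Icc θm θp ×ˢ Set.Icc vm vp))
    (h1m : ∀ v ∈ Set.Icc vm vp, 0 ≤ f₁ θm v)
    (h1p : ∀ v ∈ Set.Icc vm vp, f₁ θp v ≤ 0)
    (h2m : ∀ θ ∈ Set.Icc θm θp, 0 ≤ f₂ θ vm)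
    (h2p : ∀ θ ∈ Set.Icc θm θp, f₂ θ vp ≤ 0) :
    ∃ θ ∈ Set.Icc θm θp, ∃ v ∈ Set.Icc vm vp, f₁ θ v = 0 ∧ f₂ θ v = 0 := by
  have hK : IsCompact (Set.Icc θm θp ×ˢ Set.Icc vm vp) := isCompact_Icc.prod isCompact_Icc
  have hmem0 : ((θm, vm) : ℝ × ℝ) ∈ Set.Icc θm θp ×ˢ Set.Icc vm vp :=
    ⟨⟨le_refl _, hθ.le⟩, ⟨le_refl _, hv.le⟩⟩
  have hg : ContinuousOn (fun p : ℝ × ℝ => ‖(f₁ p.1 p.2, f₂ p.1 p.2)‖)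
      (Set.Icc θm θp ×ˢ Set.Icc vm vp) := hcont.norm
  obtain ⟨p₀, hp₀K, hp₀min⟩ := hK.exists_isMinOn ⟨_, hmem0⟩ hg
  -- approximate zeros exist
  have key : ∀ ε : ℝ, 0 < ε → ∃ p ∈ Set.Icc θm θp ×ˢ Set.Icc vm vp,
      ‖(f₁ p.1 p.2, f₂ p.1 p.2)‖ < ε := by
    intro ε hε
    have huc := hK.uniformContinuousOn_of_continuous hcont
    rw [Metric.uniformContinuousOn_iff] at huc
    obtain ⟨δ, hδ, hδ'⟩ := huc (ε/2) (by positivity)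
    have hΔθ : (0:ℝ) < θp - θm := sub_pos.2 hθ
    have hΔv : (0:ℝ) < vp - vm := sub_pos.2 hv
    obtain ⟨n, hn⟩ := exists_nat_gt ((θp - θm + (vp - vm))/δ)
    have hn0 : 0 < n := by
      have h1 : (0:ℝ) < n := lt_trans (by positivity) hn
      exact_mod_cast h1
    have hnR : (0:ℝ) < n := by exact_mod_cast hn0
    have hmesh : (θp - θm + (vp - vm))/n < δ := by
      rw [div_lt_iff₀ hnR]
      rw [div_lt_iff₀ hδ] at hn
      linarith [hn]
    set gx : ℕ → ℝ := fun i => θm + i * ((θp - θm)/n) with hgx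
    set gy : ℕ → ℝ := fun j => vm + j * ((vp - vm)/n) with hgy
    have hgx0 : gx 0 = θm := by simp [hgx]
    have hgy0 : gy 0 = vm := by simp [hgy]
    have hgxn : gx n = θp := by
      have h2 : (n:ℝ) * ((θp - θm)/n) = θp - θm := by field_simp
      simp only [hgx]; linarith
    have hgyn : gy n = vp := by
      have h2 : (n:ℝ) * ((vp - vm)/n) = vp - vm := by field_simp
      simp only [hgy]; linarith
    have hgxmem : ∀ i, i ≤ n → gx i ∈ Set.Icc θm θp := by
      intro i hi
      constructor
      · have : (0:ℝ) ≤ i * ((θp - θm)/n) := by positivity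
        simp [hgx]; linarith
      · have h1 : (i:ℝ) * ((θp - θm)/n) ≤ n * ((θp - θm)/n) := by
          apply mul_le_mul_of_nonneg_right
          · exact_mod_cast hi
          · positivity
        have h2 : (n:ℝ) * ((θp - θm)/n) = θp - θm := by field_simp
        simp only [hgx]; linarith
    have hgymem : ∀ j, j ≤ n → gy j ∈ Set.Icc vm vp := by
      intro j hj
      constructor
      · have : (0:ℝ) ≤ j * ((vp - vm)/n) := by positivity
        simp [hgy]; linarith
      · have h1 : (j:ℝ) * ((vp - vm)/n) ≤ n * ((vp - vm)/n) := by
          apply mul_le_mul_of_nonneg_right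
          · exact_mod_cast hj
          · positivity
        have h2 : (n:ℝ) * ((vp - vm)/n) = vp - vm := by field_simp
        simp only [hgy]; linarith
    have hmemK : ∀ a b, a ≤ n → b ≤ n →
        ((gx a, gy b) : ℝ × ℝ) ∈ Set.Icc θm θp ×ˢ Set.Icc vm vp := fun a b ha hb =>
      ⟨hgxmem a ha, hgymem b hb⟩
    -- distances between nearby grid points
    have hgxd : ∀ a b : ℕ, (a:ℝ) - b ≤ 1 → (b:ℝ) - a ≤ 1 →
        dist (gx a) (gx b) ≤ (θp - θm)/n := by
      intro a b h1 h2
      rw [Real.dist_eq]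
      have h3 : gx a - gx b = ((a:ℝ) - b) * ((θp - θm)/n) := by simp [hgx]; ring
      rw [h3, abs_mul, abs_of_nonneg (by positivity : (0:ℝ) ≤ (θp - θm)/n)]
      have h4 : |(a:ℝ) - b| ≤ 1 := abs_le.2 ⟨by linarith, h1⟩
      calc |(a:ℝ) - b| * ((θp - θm)/n) ≤ 1 * ((θp - θm)/n) :=
            mul_le_mul_of_nonneg_right h4 (by positivity)
        _ = (θp - θm)/n := one_mul _
    have hgyd : ∀ a b : ℕ, (a:ℝ) - b ≤ 1 → (b:ℝ) - a ≤ 1 →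
        dist (gy a) (gy b) ≤ (vp - vm)/n := by
      intro a b h1 h2
      rw [Real.dist_eq]
      have h3 : gy a - gy b = ((a:ℝ) - b) * ((vp - vm)/n) := by simp [hgy]; ring
      rw [h3, abs_mul, abs_of_nonneg (by positivity : (0:ℝ) ≤ (vp - vm)/n)]
      have h4 : |(a:ℝ) - b| ≤ 1 := abs_le.2 ⟨by linarith, h1⟩
      calc |(a:ℝ) - b| * ((vp - vm)/n) ≤ 1 * ((vp - vm)/n) :=
            mul_le_mul_of_nonneg_right h4 (by positivity)
        _ = (vp - vm)/n := one_mul _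
    have hcorner : ∀ a₁ b₁ a₂ b₂ : ℕ, (a₁:ℝ) - a₂ ≤ 1 → (a₂:ℝ) - a₁ ≤ 1 →
        (b₁:ℝ) - b₂ ≤ 1 → (b₂:ℝ) - b₁ ≤ 1 →
        dist ((gx a₁, gy b₁) : ℝ × ℝ) ((gx a₂, gy b₂) : ℝ × ℝ) < δ := by
      intro a₁ b₁ a₂ b₂ h1 h2 h3 h4
      rw [Prod.dist_eq]
      have e1 := hgxd a₁ a₂ h1 h2
      have e2 := hgyd b₁ b₂ h3 h4
      have e3 : (θp - θm)/n ≤ (θp - θm + (vp - vm))/n :=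
        (div_le_div_iff_of_pos_right hnR).2 (by linarith)
      have e4 : (vp - vm)/n ≤ (θp - θm + (vp - vm))/n :=
        (div_le_div_iff_of_pos_right hnR).2 (by linarith)
      exact max_lt (lt_of_le_of_lt (e1.trans e3) hmesh) (lt_of_le_of_lt (e2.trans e4) hmesh)
    -- the sign grids
    set s : ℕ → ℕ → Bool := fun i j => decide (i ≠ n ∧ (i = 0 ∨ 0 ≤ f₁ (gx i) (gy j))) with hs
    set t : ℕ → ℕ → Bool := fun i j => decide (j ≠ n ∧ (j = 0 ∨ 0 ≤ f₂ (gx i) (gy j))) with ht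
    have hstrue : ∀ a b, a ≤ n → b ≤ n → s a b = true → 0 ≤ f₁ (gx a) (gy b) := by
      intro a b ha hb h
      rw [hs, decide_eq_true_eq] at h
      rcases h.2 with h2 | h2
      · subst h2; rw [hgx0]; exact h1m _ (hgymem b hb)
      · exact h2
    have hsfalse : ∀ a b, a ≤ n → b ≤ n → s a b = false → f₁ (gx a) (gy b) ≤ 0 := by
      intro a b ha hb h
      rw [hs, decide_eq_false_iff_not] at h
      by_cases han : a = n
      · subst han; rw [hgxn]; exact h1p _ (hgymem b hb)
      · push_neg at h
        rcases h han with ⟨-, h2⟩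
        exact le_of_lt h2
    have httrue : ∀ a b, a ≤ n → b ≤ n → t a b = true → 0 ≤ f₂ (gx a) (gy b) := by
      intro a b ha hb h
      rw [ht, decide_eq_true_eq] at h
      rcases h.2 with h2 | h2
      · subst h2; rw [hgy0]; exact h2m _ (hgxmem a ha)
      · exact h2
    have htfalse : ∀ a b, a ≤ n → b ≤ n → t a b = false → f₂ (gx a) (gy b) ≤ 0 := by
      intro a b ha hb h
      rw [ht, decide_eq_false_iff_not] at h
      by_cases hbn : b = n
      · subst hbn; rw [hgyn]; exact h2p _ (hgxmem a ha)
      · push_neg at h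
        rcases h hbn with ⟨-, h2⟩
        exact le_of_lt h2
    obtain ⟨i, hi, j, hj, hsnc, htnc⟩ := pmGrid n hn0 s t
      (fun j hj => by simp [hs]; omega)
      (fun j hj => by simp [hs])
      (fun i hi => by simp [ht]; omega)
      (fun i hi => by simp [ht])
    -- a corner predicate
    have hcornerle : ∀ a : ℕ, (a = i ∨ a = i + 1) → a ≤ n := by
      rintro a (rfl | rfl) <;> omega
    have hcornerle' : ∀ b : ℕ, (b = j ∨ b = j + 1) → b ≤ n := by
      rintro b (rfl | rfl) <;> omega
    have hcornerd : ∀ a₁ a₂ : ℕ, (a₁ = i ∨ a₁ = i + 1) → (a₂ = i ∨ a₂ = i + 1) →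
        ((a₁:ℝ) - a₂ ≤ 1 ∧ (a₂:ℝ) - a₁ ≤ 1) := by
      rintro a₁ a₂ (rfl | rfl) (rfl | rfl) <;> constructor <;> push_cast <;> norm_num
    have hcornerd' : ∀ b₁ b₂ : ℕ, (b₁ = j ∨ b₁ = j + 1) → (b₂ = j ∨ b₂ = j + 1) →
        ((b₁:ℝ) - b₂ ≤ 1 ∧ (b₂:ℝ) - b₁ ≤ 1) := by
      rintro b₁ b₂ (rfl | rfl) (rfl | rfl) <;> constructor <;> push_cast <;> norm_num
    -- extract corners with each sign
    have hsex : (∃ a b, ((a = i ∨ a = i+1) ∧ (b = j ∨ b = j+1)) ∧ s a b = true) ∧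
        (∃ a b, ((a = i ∨ a = i+1) ∧ (b = j ∨ b = j+1)) ∧ s a b = false) := by
      obtain ⟨h1, h2⟩ := pmBool4 _ _ _ _ hsnc
      constructor
      · rcases h1 with h | h | h | h
        · exact ⟨i, j, ⟨Or.inl rfl, Or.inl rfl⟩, h⟩
        · exact ⟨i+1, j, ⟨Or.inr rfl, Or.inl rfl⟩, h⟩
        · exact ⟨i, j+1, ⟨Or.inl rfl, Or.inr rfl⟩, h⟩
        · exact ⟨i+1, j+1, ⟨Or.inr rfl, Or.inr rfl⟩, h⟩
      · rcases h2 with h | h | h | h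
        · exact ⟨i, j, ⟨Or.inl rfl, Or.inl rfl⟩, h⟩
        · exact ⟨i+1, j, ⟨Or.inr rfl, Or.inl rfl⟩, h⟩
        · exact ⟨i, j+1, ⟨Or.inl rfl, Or.inr rfl⟩, h⟩
        · exact ⟨i+1, j+1, ⟨Or.inr rfl, Or.inr rfl⟩, h⟩
    have htex : (∃ a b, ((a = i ∨ a = i+1) ∧ (b = j ∨ b = j+1)) ∧ t a b = true) ∧
        (∃ a b, ((a = i ∨ a = i+1) ∧ (b = j ∨ b = j+1)) ∧ t a b = false) := by
      obtain ⟨h1, h2⟩ := pmBool4 _ _ _ _ htnc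
      constructor
      · rcases h1 with h | h | h | h
        · exact ⟨i, j, ⟨Or.inl rfl, Or.inl rfl⟩, h⟩
        · exact ⟨i+1, j, ⟨Or.inr rfl, Or.inl rfl⟩, h⟩
        · exact ⟨i, j+1, ⟨Or.inl rfl, Or.inr rfl⟩, h⟩
        · exact ⟨i+1, j+1, ⟨Or.inr rfl, Or.inr rfl⟩, h⟩
      · rcases h2 with h | h | h | h
        · exact ⟨i, j, ⟨Or.inl rfl, Or.inl rfl⟩, h⟩
        · exact ⟨i+1, j, ⟨Or.inr rfl, Or.inl rfl⟩, h⟩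
        · exact ⟨i, j+1, ⟨Or.inl rfl, Or.inr rfl⟩, h⟩
        · exact ⟨i+1, j+1, ⟨Or.inr rfl, Or.inr rfl⟩, h⟩
    obtain ⟨⟨ap, bp, hcp, hsp⟩, ⟨am, bm, hcm, hsm⟩⟩ := hsex
    obtain ⟨⟨cp, dp, hdp, htp⟩, ⟨cm, dm, hdm, htm⟩⟩ := htex
    -- uniform continuity bound between any two corners, componentwise
    have hf1bound : ∀ a₁ b₁ a₂ b₂ : ℕ,
        (a₁ = i ∨ a₁ = i+1) → (b₁ = j ∨ b₁ = j+1) → (a₂ = i ∨ a₂ = i+1) → (b₂ = j ∨ b₂ = j+1) →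
        |f₁ (gx a₁) (gy b₁) - f₁ (gx a₂) (gy b₂)| < ε/2 ∧
        |f₂ (gx a₁) (gy b₁) - f₂ (gx a₂) (gy b₂)| < ε/2 := by
      intro a₁ b₁ a₂ b₂ ha₁ hb₁ ha₂ hb₂
      obtain ⟨hd1, hd2⟩ := hcornerd a₁ a₂ ha₁ ha₂
      obtain ⟨hd3, hd4⟩ := hcornerd' b₁ b₂ hb₁ hb₂
      have hdist := hcorner a₁ b₁ a₂ b₂ hd1 hd2 hd3 hd4
      have hFd := hδ' _ (hmemK a₁ b₁ (hcornerle a₁ ha₁) (hcornerle' b₁ hb₁))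
        _ (hmemK a₂ b₂ (hcornerle a₂ ha₂) (hcornerle' b₂ hb₂)) hdist
      rw [Prod.dist_eq, max_lt_iff] at hFd
      simpa [Real.dist_eq] using hFd
    have hf1p : 0 ≤ f₁ (gx ap) (gy bp) :=
      hstrue ap bp (hcornerle ap hcp.1) (hcornerle' bp hcp.2) hsp
    have hf1m : f₁ (gx am) (gy bm) ≤ 0 :=
      hsfalse am bm (hcornerle am hcm.1) (hcornerle' bm hcm.2) hsm
    have hf2p : 0 ≤ f₂ (gx cp) (gy dp) :=
      httrue cp dp (hcornerle cp hdp.1) (hcornerle' dp hdp.2) htp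
    have hf2m : f₂ (gx cm) (gy dm) ≤ 0 :=
      htfalse cm dm (hcornerle cm hdm.1) (hcornerle' dm hdm.2) htm
    -- |f₁| and |f₂| are < ε at the bottom-left corner
    refine ⟨(gx i, gy j), hmemK i j hi.le hj.le, ?_⟩
    have hb1 : |f₁ (gx i) (gy j)| < ε := by
      have h1 := (hf1bound i j ap bp (Or.inl rfl) (Or.inl rfl) hcp.1 hcp.2).1
      have h2 := (hf1bound ap bp am bm hcp.1 hcp.2 hcm.1 hcm.2).1
      have h3 : |f₁ (gx ap) (gy bp)| < ε/2 := by
        rw [abs_of_nonneg hf1p]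
        calc f₁ (gx ap) (gy bp) ≤ f₁ (gx ap) (gy bp) - f₁ (gx am) (gy bm) := by linarith
          _ ≤ |f₁ (gx ap) (gy bp) - f₁ (gx am) (gy bm)| := le_abs_self _
          _ < ε/2 := h2
      have h4 : |f₁ (gx i) (gy j)| ≤
          |f₁ (gx i) (gy j) - f₁ (gx ap) (gy bp)| + |f₁ (gx ap) (gy bp)| := by
        have := abs_add_le (f₁ (gx i) (gy j) - f₁ (gx ap) (gy bp)) (f₁ (gx ap) (gy bp))
        simpa using this
      linarith
    have hb2 : |f₂ (gx i) (gy j)| < ε := by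
      have h1 := (hf1bound i j cp dp (Or.inl rfl) (Or.inl rfl) hdp.1 hdp.2).2
      have h2 := (hf1bound cp dp cm dm hdp.1 hdp.2 hdm.1 hdm.2).2
      have h3 : |f₂ (gx cp) (gy dp)| < ε/2 := by
        rw [abs_of_nonneg hf2p]
        calc f₂ (gx cp) (gy dp) ≤ f₂ (gx cp) (gy dp) - f₂ (gx cm) (gy dm) := by linarith
          _ ≤ |f₂ (gx cp) (gy dp) - f₂ (gx cm) (gy dm)| := le_abs_self _
          _ < ε/2 := h2
      have h4 : |f₂ (gx i) (gy j)| ≤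
          |f₂ (gx i) (gy j) - f₂ (gx cp) (gy dp)| + |f₂ (gx cp) (gy dp)| := by
        have := abs_add_le (f₂ (gx i) (gy j) - f₂ (gx cp) (gy dp)) (f₂ (gx cp) (gy dp))
        simpa using this
      linarith
    rw [Prod.norm_def]
    exact max_lt (by simpa [Real.norm_eq_abs] using hb1) (by simpa [Real.norm_eq_abs] using hb2)
  -- conclude: the minimum of the norm is 0
  have hmin0 : ‖(f₁ p₀.1 p₀.2, f₂ p₀.1 p₀.2)‖ ≤ 0 := by
    by_contra h
    push_neg at h
    obtain ⟨p, hpK, hp⟩ := key _ h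
    exact absurd (hp₀min hpK) (not_le.2 hp)
  have heq : (f₁ p₀.1 p₀.2, f₂ p₀.1 p₀.2) = ((0:ℝ), (0:ℝ)) := by
    have := le_antisymm hmin0 (norm_nonneg _)
    exact norm_eq_zero.1 this
  have he1 : f₁ p₀.1 p₀.2 = 0 := congrArg Prod.fst heq
  have he2 : f₂ p₀.1 p₀.2 = 0 := congrArg Prod.snd heq
  exact ⟨p₀.1, hp₀K.1, p₀.2, hp₀K.2, he1, he2⟩
end
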